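/- arXiv:1207.2456 — 2 statements merged into one kernel-verified Lean document; each statement's English description precedes it below -/
import Mathlib

section
/- Consider AIHT applied to y = Mx + e where x is ℓ-cosparse, with constant step size μ satisfying 1/μ ≥ 1 + δ_{2ℓ-p}, where δ_{2ℓ-p} is the Ω-RIP constant of M and the projection uses a near-optimal cosupport selection with constant C_ℓ. Then at iteration t, ‖y - Mx̂^t‖₂² - ‖y - Mx̂^{t-1}‖₂² ≤ C_ℓ(‖y - Mx‖₂² - ‖y - Mx̂^{t-1}‖₂²) + C_ℓ(1/(μ(1-δ_{2ℓ-p})) - 1)‖M(x - x̂^{t-1})‖₂² + (C_ℓ - 1)μσ_M²‖y - Mx̂^{t-1}‖₂², where σ_M is the largest singular value of M. -/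
noncomputable section

abbrev Evec (d : ℕ) := EuclideanSpace ℝ (Fin d)

def nullSp {d p : ℕ} (Om : Evec d →L[ℝ] Evec p) (Λ : Finset (Fin p)) : Submodule ℝ (Evec d) where
  carrier := {x | ∀ i ∈ Λ, Om x i = 0}
  zero_mem' := by intro i _; simp
  add_mem' := by intro a b ha hb i hi; simp [ha i hi, hb i hi]
  smul_mem' := by intro c a ha i hi; simp [ha i hi]

def Qp {d p : ℕ} (Om : Evec d →L[ℝ] Evec p) (Λ : Finset (Fin p)) : Evec d →L[ℝ] Evec d :=
  (nullSp Om Λ).subtypeL ∘L (nullSp Om Λ).orthogonalProjection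

def Cosparse {d p : ℕ} (Om : Evec d →L[ℝ] Evec p) (ℓ : ℕ) (v : Evec d) : Prop :=
  ℓ ≤ {i : Fin p | Om v i = 0}.ncard

def ORIP {d m p : ℕ} (M : Evec d →L[ℝ] Evec m) (Om : Evec d →L[ℝ] Evec p) (ℓ : ℕ) (δ : ℝ) : Prop :=
  ∀ v : Evec d, Cosparse Om ℓ v →
    (1 - δ) * ‖v‖ ^ 2 ≤ ‖M v‖ ^ 2 ∧ ‖M v‖ ^ 2 ≤ (1 + δ) * ‖v‖ ^ 2

/-! With `g = M* (y - M xprev)` and `xg = xprev + μ g`, the upper RIP bound and `1/μ ≥ 1 + δ` make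
the quadratic model of curvature `1/μ` around `xprev` an upper bound for the residual at `xt`;
completing the square rewrites that model as `μ⁻¹ ‖xt - xg‖² - μ ‖g‖²`. Near-optimality of the
cosupport selection trades `xt` for the true signal `x`, and expanding back around `xprev`, the
lower RIP bound on `x - xprev` and `‖g‖ ≤ ‖M‖ ‖y - M xprev‖` give the claim. -/

open scoped RealInnerProductSpace
open ContinuousLinearMap (adjoint)

section HilbertSpace

variable {E F : Type*} [NormedAddCommGroup E] [InnerProductSpace ℝ E] [CompleteSpace E]
  [NormedAddCommGroup F] [InnerProductSpace ℝ F] [CompleteSpace F]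

theorem norm_sub_apply_sq_eq (A : E →L[ℝ] F) (y : F) (w₀ w : E) :
    ‖y - A w‖ ^ 2 = ‖y - A w₀‖ ^ 2 - 2 * ⟪w - w₀, adjoint A (y - A w₀)⟫ + ‖A (w - w₀)‖ ^ 2 := by
  have : y - A w = (y - A w₀) - A (w - w₀) := by rw [map_sub]; abel
  rw [this, norm_sub_sq_real, ContinuousLinearMap.adjoint_inner_right, real_inner_comm]

omit [CompleteSpace E] in
theorem inv_mul_norm_sub_add_smul_sq (w₀ w g : E) {μ : ℝ} (hμ : μ ≠ 0) :
    μ⁻¹ * ‖w - (w₀ + μ • g)‖ ^ 2 = μ⁻¹ * ‖w - w₀‖ ^ 2 - 2 * ⟪w - w₀, g⟫ + μ * ‖g‖ ^ 2 := by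
  have : w - (w₀ + μ • g) = (w - w₀) - μ • g := by abel
  rw [this, norm_sub_sq_real, real_inner_smul_right, norm_smul, mul_pow, Real.norm_eq_abs, sq_abs]
  field_simp

theorem sq_residual_sub_le_of_near {A : E →L[ℝ] F} {y : F} {w₀ x xt : E} {C μ : ℝ} (hμ : 0 < μ)
    (hxt : ‖A (xt - w₀)‖ ^ 2 ≤ μ⁻¹ * ‖xt - w₀‖ ^ 2)
    (hnear : ‖xt - (w₀ + μ • adjoint A (y - A w₀))‖ ^ 2
      ≤ C * ‖x - (w₀ + μ • adjoint A (y - A w₀))‖ ^ 2) :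
    ‖y - A xt‖ ^ 2 - ‖y - A w₀‖ ^ 2 ≤
      C * (μ⁻¹ * ‖x - w₀‖ ^ 2 - 2 * ⟪x - w₀, adjoint A (y - A w₀)⟫)
      + (C - 1) * μ * ‖adjoint A (y - A w₀)‖ ^ 2 := by
  set g := adjoint A (y - A w₀)
  calc ‖y - A xt‖ ^ 2 - ‖y - A w₀‖ ^ 2
      = ‖A (xt - w₀)‖ ^ 2 - 2 * ⟪xt - w₀, g⟫ := by rw [norm_sub_apply_sq_eq A y w₀ xt]; ring
    _ ≤ μ⁻¹ * ‖xt - w₀‖ ^ 2 - 2 * ⟪xt - w₀, g⟫ := by gcongr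
    _ = μ⁻¹ * ‖xt - (w₀ + μ • g)‖ ^ 2 - μ * ‖g‖ ^ 2 := by
      rw [inv_mul_norm_sub_add_smul_sq w₀ xt g hμ.ne']; ring
    _ ≤ μ⁻¹ * (C * ‖x - (w₀ + μ • g)‖ ^ 2) - μ * ‖g‖ ^ 2 := by gcongr
    _ = C * (μ⁻¹ * ‖x - w₀‖ ^ 2 - 2 * ⟪x - w₀, g⟫) + (C - 1) * μ * ‖g‖ ^ 2 := by
      rw [mul_left_comm, inv_mul_norm_sub_add_smul_sq w₀ x g hμ.ne']; ring

theorem sq_residual_sub_le {A : E →L[ℝ] F} {y : F} {w₀ x xt : E} {C δ μ : ℝ}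
    (hC : 1 ≤ C) (hδ : δ < 1) (hμ : 0 < μ)
    (hxt : ‖A (xt - w₀)‖ ^ 2 ≤ μ⁻¹ * ‖xt - w₀‖ ^ 2)
    (hx : (1 - δ) * ‖x - w₀‖ ^ 2 ≤ ‖A (x - w₀)‖ ^ 2)
    (hnear : ‖xt - (w₀ + μ • adjoint A (y - A w₀))‖ ^ 2
      ≤ C * ‖x - (w₀ + μ • adjoint A (y - A w₀))‖ ^ 2) :
    ‖y - A xt‖ ^ 2 - ‖y - A w₀‖ ^ 2 ≤
      C * (‖y - A x‖ ^ 2 - ‖y - A w₀‖ ^ 2)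
      + C * (1 / (μ * (1 - δ)) - 1) * ‖A (x - w₀)‖ ^ 2
      + (C - 1) * μ * ‖A‖ ^ 2 * ‖y - A w₀‖ ^ 2 := by
  have hlower : μ⁻¹ * ‖x - w₀‖ ^ 2 ≤ 1 / (μ * (1 - δ)) * ‖A (x - w₀)‖ ^ 2 := by
    rw [one_div, mul_inv, mul_assoc]
    gcongr
    rwa [le_inv_mul_iff₀ (sub_pos.2 hδ)]
  have hgrad : ‖adjoint A (y - A w₀)‖ ^ 2 ≤ ‖A‖ ^ 2 * ‖y - A w₀‖ ^ 2 := by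
    rw [← mul_pow, ← LinearIsometryEquiv.norm_map adjoint A]
    gcongr
    exact (adjoint A).le_opNorm _
  have hexp := norm_sub_apply_sq_eq A y w₀ x
  calc ‖y - A xt‖ ^ 2 - ‖y - A w₀‖ ^ 2
      ≤ C * (μ⁻¹ * ‖x - w₀‖ ^ 2 - 2 * ⟪x - w₀, adjoint A (y - A w₀)⟫)
        + (C - 1) * μ * ‖adjoint A (y - A w₀)‖ ^ 2 := sq_residual_sub_le_of_near hμ hxt hnear
    _ ≤ C * (1 / (μ * (1 - δ)) * ‖A (x - w₀)‖ ^ 2 - 2 * ⟪x - w₀, adjoint A (y - A w₀)⟫)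
        + (C - 1) * μ * (‖A‖ ^ 2 * ‖y - A w₀‖ ^ 2) := by
      have : 0 ≤ C - 1 := by linarith
      gcongr
    _ = _ := by rw [hexp]; ring

end HilbertSpace

theorem Cosparse.sub {d p ℓ ℓ' : ℕ} {Om : Evec d →L[ℝ] Evec p} {a b : Evec d}
    (ha : Cosparse Om ℓ a) (hb : Cosparse Om ℓ' b) : Cosparse Om (ℓ + ℓ' - p) (a - b) := by
  unfold Cosparse at *
  set A : Set (Fin p) := {i | Om a i = 0}
  set B : Set (Fin p) := {i | Om b i = 0}
  have hinter : (A ∩ B).ncard ≤ {i : Fin p | Om (a - b) i = 0}.ncard := by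
    refine Set.ncard_le_ncard (fun i ⟨hia, hib⟩ => ?_) (Set.toFinite _)
    simp_all [A, B]
  have hunion : (A ∪ B).ncard ≤ p := by
    simpa using Set.ncard_le_ncard (Set.subset_univ (A ∪ B)) (Set.toFinite _)
  have := Set.ncard_union_add_ncard_inter A B (Set.toFinite _) (Set.toFinite _)
  omega

theorem cosparse_Qp_apply {d p ℓ : ℕ} (Om : Evec d →L[ℝ] Evec p) {Λ : Finset (Fin p)}
    (hΛ : ℓ ≤ Λ.card) (z : Evec d) : Cosparse Om ℓ (Qp Om Λ z) := by
  have hmem : ∀ i ∈ Λ, Om (Qp Om Λ z) i = 0 := ((nullSp Om Λ).orthogonalProjectionOnto z).2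
  calc ℓ ≤ (Λ : Set (Fin p)).ncard := by rwa [Set.ncard_coe_finset]
    _ ≤ _ := Set.ncard_le_ncard hmem (Set.toFinite _)

theorem stmt7_general {d m p ℓ : ℕ} (M : Evec d →L[ℝ] Evec m) (Om : Evec d →L[ℝ] Evec p)
    (x xprev xg xt : Evec d) (y : Evec m) (S : Evec d → Finset (Fin p))
    (C δ μ : ℝ)
    (hx : Cosparse Om ℓ x)
    (hxprev : Cosparse Om ℓ xprev)
    (hScard : ∀ z : Evec d, ℓ ≤ (S z).card)
    (hSnear : ∀ z v : Evec d, Cosparse Om ℓ v →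
      ‖z - Qp Om (S z) z‖ ^ 2 ≤ C * ‖z - v‖ ^ 2)
    (hC : 1 ≤ C)
    (hrip : ORIP M Om (2 * ℓ - p) δ)
    (hδ1 : δ < 1)
    (hμ : 0 < μ) (hμδ : 1 + δ ≤ 1 / μ)
    (hxg : xg = xprev + μ • (ContinuousLinearMap.adjoint M) (y - M xprev))
    (hxt : xt = Qp Om (S xg) xg) :
    ‖y - M xt‖ ^ 2 - ‖y - M xprev‖ ^ 2 ≤
      C * (‖y - M x‖ ^ 2 - ‖y - M xprev‖ ^ 2)
      + C * (1 / (μ * (1 - δ)) - 1) * ‖M (x - xprev)‖ ^ 2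
      + (C - 1) * μ * ‖M‖ ^ 2 * ‖y - M xprev‖ ^ 2 := by
  have hdiff {a : Evec d} (ha : Cosparse Om ℓ a) : Cosparse Om (2 * ℓ - p) (a - xprev) := by
    rw [two_mul]; exact ha.sub hxprev
  have hxt_cosparse : Cosparse Om ℓ xt := hxt ▸ cosparse_Qp_apply Om (hScard xg) xg
  refine sq_residual_sub_le hC hδ1 hμ ?_ (hrip _ (hdiff hx)).1 ?_
  · calc ‖M (xt - xprev)‖ ^ 2 ≤ (1 + δ) * ‖xt - xprev‖ ^ 2 := (hrip _ (hdiff hxt_cosparse)).2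
      _ ≤ μ⁻¹ * ‖xt - xprev‖ ^ 2 := by rw [← one_div]; gcongr
  · rw [← hxg, hxt, norm_sub_rev, norm_sub_rev x]
    exact hSnear xg x hx

/-- Single-iteration bound for AIHT (Lemma 5.4): with a constant step size μ
satisfying 1/μ ≥ 1 + δ_{2ℓ-p}, the objective decrease at iteration t is controlled. -/
theorem stmt7 {d m p ℓ : ℕ} (M : Evec d →L[ℝ] Evec m) (Om : Evec d →L[ℝ] Evec p)
    (x xprev xg xt : Evec d) (e y : Evec m) (S : Evec d → Finset (Fin p))
    (C δ μ : ℝ)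
    (hy : y = M x + e)
    (hx : Cosparse Om ℓ x)
    (hxprev : Cosparse Om ℓ xprev)
    (hScard : ∀ z : Evec d, ℓ ≤ (S z).card)
    (hSnear : ∀ z v : Evec d, Cosparse Om ℓ v →
      ‖z - Qp Om (S z) z‖ ^ 2 ≤ C * ‖z - v‖ ^ 2)
    (hC : 1 ≤ C)
    (hrip : ORIP M Om (2 * ℓ - p) δ)
    (hδ0 : 0 ≤ δ) (hδ1 : δ < 1)
    (hμ : 0 < μ) (hμδ : 1 + δ ≤ 1 / μ)
    (hxg : xg = xprev + μ • (ContinuousLinearMap.adjoint M) (y - M xprev))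
    (hxt : xt = Qp Om (S xg) xg) :
    ‖y - M xt‖ ^ 2 - ‖y - M xprev‖ ^ 2 ≤
      C * (‖y - M x‖ ^ 2 - ‖y - M xprev‖ ^ 2)
      + C * (1 / (μ * (1 - δ)) - 1) * ‖M (x - xprev)‖ ^ 2
      + (C - 1) * μ * ‖M‖ ^ 2 * ‖y - M xprev‖ ^ 2 :=
  stmt7_general M Om x xprev xg xt y S C δ μ hx hxprev hScard hSnear hC hrip hδ1 hμ hμδ hxg hxt
end
end

section
/- Consider the problem y = Mx + e with x ℓ-cosparse, and apply ACoSaMP with a = (2ℓ-p)/ℓ. Let w be the temporary estimate minimizing ‖y - Mv‖₂² subject to Ω_{Λ̃^t} v = 0. Then ‖x - w‖₂ ≤ (1/√(1-δ_{4ℓ-3p}²))‖P_{Λ̃^t}(x - w)‖₂ + (√(1+δ_{3ℓ-2p})/(1-δ_{4ℓ-3p}))‖e‖₂, where P_Λ = I - Q_Λ and δ_k denotes the Ω-RIP constant of M for cosparsity k. -/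
noncomputable section

/-! Put `u = x - w` and let `q = Q u` be its projection onto the null space of `Ω_{Λ̃}`, so that
`‖u‖² = ‖q‖² + ‖P u‖²` and `⟪u, q⟫ = ‖q‖²`. Optimality of `w` gives `⟪M u + e, M q⟫ = 0`, and since
`u` and `q` both vanish on `Λ ∩ Λ̃` the Ω-RIP gives `⟪u, q⟫ - ⟪M u, M q⟫ ≤ δ₄ ‖u‖ ‖q‖`. Together
with `‖M q‖ ≤ √(1 + δ₃) ‖q‖` this yields `‖q‖ ≤ δ₄ ‖u‖ + √(1 + δ₃) ‖e‖`, and the claim follows by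
solving the quadratic inequality `‖u‖² ≤ ‖P u‖² + (δ₄ ‖u‖ + √(1 + δ₃) ‖e‖)²` for `‖u‖`. -/

open scoped RealInnerProductSpace

section NullSpace

variable {d p : ℕ} (Om : Evec d →L[ℝ] Evec p)

lemma Qp_eq_starProjection (Λ : Finset (Fin p)) : Qp Om Λ = (nullSp Om Λ).starProjection := rfl

lemma nullSp_anti {Λ Λ' : Finset (Fin p)} (h : Λ ⊆ Λ') : nullSp Om Λ' ≤ nullSp Om Λ :=
  fun _ hv i hi => hv i (h hi)

variable {Om}

lemma cosparse_of_mem_nullSp {Λ : Finset (Fin p)} {k : ℕ} (hk : k ≤ Λ.card) {v : Evec d}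
    (hv : v ∈ nullSp Om Λ) : Cosparse Om k v := by
  have hsub : (↑Λ : Set (Fin p)) ⊆ {i | Om v i = 0} := hv
  exact hk.trans (Set.ncard_coe_finset Λ ▸ Set.ncard_le_ncard hsub)

end NullSpace

namespace ORIP

variable {d m p k : ℕ} {M : Evec d →L[ℝ] Evec m} {Om : Evec d →L[ℝ] Evec p} {δ : ℝ}

lemma norm_apply_le (h : ORIP M Om k δ) {v : Evec d} (hv : Cosparse Om k v) :
    ‖M v‖ ≤ √(1 + δ) * ‖v‖ := by
  rw [← Real.sqrt_sq (norm_nonneg (M v)), ← Real.sqrt_sq (norm_nonneg v),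
    ← Real.sqrt_mul' _ (sq_nonneg _)]
  exact Real.sqrt_le_sqrt (h v hv).2

lemma inner_sub_inner_le_of_cosparse_add_sub (h : ORIP M Om k δ) {u v : Evec d}
    (hadd : Cosparse Om k (u + v)) (hsub : Cosparse Om k (u - v)) :
    ⟪u, v⟫ - ⟪M u, M v⟫ ≤ δ / 2 * (‖u‖ ^ 2 + ‖v‖ ^ 2) := by
  have hlow := (h _ hadd).1
  have hupp := (h _ hsub).2
  rw [map_add, norm_add_sq_real, norm_add_sq_real] at hlow
  rw [map_sub, norm_sub_sq_real, norm_sub_sq_real] at hupp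
  linarith

lemma inner_sub_inner_le (h : ORIP M Om k δ) {K : Submodule ℝ (Evec d)}
    (hK : ∀ v ∈ K, Cosparse Om k v) {u v : Evec d} (hu : u ∈ K) (hv : v ∈ K) :
    ⟪u, v⟫ - ⟪M u, M v⟫ ≤ δ * ‖u‖ * ‖v‖ := by
  rcases eq_or_ne u 0 with rfl | hu0
  · simp
  rcases eq_or_ne v 0 with rfl | hv0
  · simp
  have hpos : 0 < ‖u‖ * ‖v‖ := by positivity
  -- rescale both vectors to the common norm `‖u‖ * ‖v‖` before polarizing
  have key := h.inner_sub_inner_le_of_cosparse_add_sub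
    (hK _ (K.add_mem (K.smul_mem ‖v‖ hu) (K.smul_mem ‖u‖ hv)))
    (hK _ (K.sub_mem (K.smul_mem ‖v‖ hu) (K.smul_mem ‖u‖ hv)))
  simp only [map_smul, real_inner_smul_left, real_inner_smul_right, norm_smul, norm_norm] at key
  refine le_of_mul_le_mul_left ?_ hpos
  nlinarith

end ORIP

lemma inner_sub_apply_eq_zero_of_forall_norm_sub_apply_le {E F : Type*}
    [NormedAddCommGroup E] [InnerProductSpace ℝ E] [NormedAddCommGroup F] [InnerProductSpace ℝ F]
    (M : E →ₗ[ℝ] F) {K : Submodule ℝ E} {y : F} {w : E} (hw : w ∈ K)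
    (hmin : ∀ v ∈ K, ‖y - M w‖ ≤ ‖y - M v‖) {u : E} (hu : u ∈ K) :
    ⟪y - M w, M u⟫ = 0 := by
  have hinf : ‖y - M w‖ = ⨅ z : (K.map M : Set F), ‖y - z‖ := by
    refine le_antisymm (le_ciInf ?_) (ciInf_le ⟨0, Set.forall_mem_range.2 fun _ => norm_nonneg _⟩
      (⟨M w, K.mem_map_of_mem hw⟩ : K.map M))
    rintro ⟨_, v, hv, rfl⟩
    exact hmin v hv
  exact ((K.map M).norm_eq_iInf_iff_real_inner_eq_zero (K.mem_map_of_mem hw)).mp hinf _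
    (K.mem_map_of_mem hu)

section Projection

variable {E : Type*} [NormedAddCommGroup E] [InnerProductSpace ℝ E] (K : Submodule ℝ E)
  [K.HasOrthogonalProjection] (v : E)

lemma Submodule.real_inner_starProjection_eq_norm_sq :
    ⟪v, K.starProjection v⟫ = ‖K.starProjection v‖ ^ 2 := by
  have h := K.starProjection_inner_eq_zero v _ (K.starProjection_apply_mem v)
  rw [inner_sub_left, real_inner_self_eq_norm_sq] at h
  linarith

lemma Submodule.norm_sq_eq_norm_sq_starProjection_add_norm_sq_sub :
    ‖v‖ ^ 2 = ‖K.starProjection v‖ ^ 2 + ‖v - K.starProjection v‖ ^ 2 := by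
  have h := norm_add_sq_eq_norm_sq_add_norm_sq_real
    (real_inner_comm (K.starProjection v) _ ▸
      K.starProjection_inner_eq_zero v _ (K.starProjection_apply_mem v))
  rwa [add_sub_cancel, ← sq, ← sq, ← sq] at h

end Projection

lemma le_div_sqrt_add_div_of_sq_le {t η ε δ : ℝ} (hη : 0 ≤ η) (hε : 0 ≤ ε) (hδ₀ : 0 ≤ δ)
    (hδ₁ : δ < 1) (h : t ^ 2 ≤ η ^ 2 + (δ * t + ε) ^ 2) :
    t ≤ η / √(1 - δ ^ 2) + ε / (1 - δ) := by
  have h1δ : 0 < 1 - δ := by linarith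
  have hs : 0 < 1 - δ ^ 2 := by nlinarith
  set a := t * (1 - δ) - ε with ha
  rcases le_or_gt a 0 with ha0 | ha0
  · have : t ≤ ε / (1 - δ) := by rw [le_div_iff₀ h1δ]; linarith
    linarith [div_nonneg hη (Real.sqrt_nonneg (1 - δ ^ 2))]
  -- `t ^ 2 - (δ t + ε) ^ 2 = a (t + δ t + ε)` and `(1 - δ) (t + δ t + ε) ≥ (1 + δ) a`
  have hsq : (1 + δ) * a ^ 2 ≤ (1 - δ) * η ^ 2 := by nlinarith
  have hroot : a * √(1 - δ ^ 2) ≤ η * (1 - δ) := by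
    refine pow_le_pow_iff_left₀ (by positivity) (by positivity) two_ne_zero |>.mp ?_
    rw [mul_pow, Real.sq_sqrt hs.le]
    nlinarith
  have : a / (1 - δ) ≤ η / √(1 - δ ^ 2) := by
    rw [div_le_div_iff₀ h1δ (Real.sqrt_pos.mpr hs)]; exact hroot
  rw [ha, sub_div, mul_div_cancel_right₀ _ h1δ.ne'] at this
  linarith

theorem stmt10_general {d m p ℓ : ℕ} (M : Evec d →L[ℝ] Evec m) (Om : Evec d →L[ℝ] Evec p)
    (x w : Evec d) (e y : Evec m) (Λx Λt : Finset (Fin p)) (δ₃ δ₄ : ℝ)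
    (hy : y = M x + e)
    (hΛx : ∀ i ∈ Λx, Om x i = 0)
    (hΛtcard : 3 * ℓ - 2 * p ≤ Λt.card)
    (hintcard : 4 * ℓ - 3 * p ≤ (Λx ∩ Λt).card)
    (hw1 : w ∈ nullSp Om Λt)
    (hw2 : ∀ v ∈ nullSp Om Λt, ‖y - M w‖ ≤ ‖y - M v‖)
    (hrip3 : ORIP M Om (3 * ℓ - 2 * p) δ₃)
    (hrip4 : ORIP M Om (4 * ℓ - 3 * p) δ₄)
    (hδ₄0 : 0 ≤ δ₄) (hδ₄1 : δ₄ < 1) :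
    ‖x - w‖ ≤ (1 / Real.sqrt (1 - δ₄ ^ 2)) * ‖(x - w) - Qp Om Λt (x - w)‖
      + (Real.sqrt (1 + δ₃) / (1 - δ₄)) * ‖e‖ := by
  rw [Qp_eq_starProjection, one_div_mul_eq_div, div_mul_eq_mul_div]
  set K := nullSp Om Λt
  set u := x - w
  set q := K.starProjection u
  have hq : q ∈ K := K.starProjection_apply_mem u
  have hu' : u ∈ nullSp Om (Λx ∩ Λt) :=
    sub_mem (nullSp_anti Om Finset.inter_subset_left hΛx)
      (nullSp_anti Om Finset.inter_subset_right hw1)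
  have hq' : q ∈ nullSp Om (Λx ∩ Λt) := nullSp_anti Om Finset.inter_subset_right hq
  have horth : ⟪M u, M q⟫ = ⟪-e, M q⟫ := by
    have h := inner_sub_apply_eq_zero_of_forall_norm_sub_apply_le M.toLinearMap hw1 hw2 hq
    rw [ContinuousLinearMap.coe_coe, hy, show M x + e - M w = M u + e by simp [u]; abel,
      inner_add_left] at h
    rw [inner_neg_left]
    linarith
  have hcross := hrip4.inner_sub_inner_le (fun _ => cosparse_of_mem_nullSp hintcard) hu' hq'
  rw [show ⟪u, q⟫ = ‖q‖ ^ 2 from K.real_inner_starProjection_eq_norm_sq u, horth] at hcross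
  have hMq := hrip3.norm_apply_le (cosparse_of_mem_nullSp hΛtcard hq)
  have he : ⟪-e, M q⟫ ≤ ‖e‖ * ‖M q‖ := norm_neg e ▸ real_inner_le_norm (-e) (M q)
  have hq_le : ‖q‖ ≤ δ₄ * ‖u‖ + √(1 + δ₃) * ‖e‖ := by
    have hq_sq : ‖q‖ ^ 2 ≤ (δ₄ * ‖u‖ + √(1 + δ₃) * ‖e‖) * ‖q‖ := by
      nlinarith [mul_le_mul_of_nonneg_left hMq (norm_nonneg e)]
    nlinarith [(by positivity : 0 ≤ δ₄ * ‖u‖ + √(1 + δ₃) * ‖e‖)]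
  have hpyth : ‖u‖ ^ 2 = ‖q‖ ^ 2 + ‖u - q‖ ^ 2 :=
    K.norm_sq_eq_norm_sq_starProjection_add_norm_sq_sub u
  refine le_div_sqrt_add_div_of_sq_le (norm_nonneg (u - q)) (by positivity) hδ₄0 hδ₄1 ?_
  nlinarith [norm_nonneg q, mul_nonneg hδ₄0 (norm_nonneg u)]

/-- Lemma for ACoSaMP (Lemma 6.6): bound on ‖x - w‖ in terms of
‖P_{Λ̃}(x - w)‖ and ‖e‖, where w is the constrained least-squares estimate. -/
theorem stmt10 {d m p ℓ : ℕ} (M : Evec d →L[ℝ] Evec m) (Om : Evec d →L[ℝ] Evec p)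
    (x w : Evec d) (e y : Evec m) (Λx Λt : Finset (Fin p)) (δ₃ δ₄ : ℝ)
    (hy : y = M x + e)
    (hΛx : ∀ i ∈ Λx, Om x i = 0) (hΛxcard : ℓ ≤ Λx.card)
    (hΛtcard : 3 * ℓ - 2 * p ≤ Λt.card)
    (hintcard : 4 * ℓ - 3 * p ≤ (Λx ∩ Λt).card)
    (hw1 : w ∈ nullSp Om Λt)
    (hw2 : ∀ v ∈ nullSp Om Λt, ‖y - M w‖ ≤ ‖y - M v‖)
    (hrip3 : ORIP M Om (3 * ℓ - 2 * p) δ₃)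
    (hrip4 : ORIP M Om (4 * ℓ - 3 * p) δ₄)
    (hδ₃ : 0 ≤ δ₃) (hδ₄0 : 0 ≤ δ₄) (hδ₄1 : δ₄ < 1) :
    ‖x - w‖ ≤ (1 / Real.sqrt (1 - δ₄ ^ 2)) * ‖(x - w) - Qp Om Λt (x - w)‖
      + (Real.sqrt (1 + δ₃) / (1 - δ₄)) * ‖e‖ :=
  stmt10_general M Om x w e y Λx Λt δ₃ δ₄ hy hΛx hΛtcard hintcard hw1 hw2 hrip3 hrip4 hδ₄0 hδ₄1
end
end
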